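/- arXiv:2308.01855 — 4 statements merged into one kernel-verified Lean document; each statement's English description precedes it below -/
import Mathlib

section
/- In a cycle graph C_n with n ≥ 4 vertices, the maximum size of a set of vertices in geodesic mutual visibility is exactly 3. -/
/-!
For four vertices `a < b < c < d` of `C_n`, every walk from `a` to `c` passes through `b` or `d`,
because an edge leaving the arc `(b, d)` has an endpoint `b` or `d`; so no four vertices are
mutually visible. Conversely `0, ⌊n/2⌋, n - 1` are: `0` and `n - 1` are adjacent, and the two
remaining arcs have length at most `n / 2`, so they are geodesics, as the cyclic distance to a
fixed vertex changes by at most one along an edge.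
-/

/-- A set `S` of vertices of a graph `G` is in geodesic mutual visibility:
every pair of distinct vertices of `S` admits a shortest path (geodesic)
between them whose internal vertices are all outside `S`. -/
def gmv {V : Type*} (G : SimpleGraph V) (S : Finset V) : Prop :=
  ∀ u ∈ S, ∀ v ∈ S, u ≠ v →
    ∃ p : G.Walk u v, p.length = G.dist u v ∧
      ∀ w ∈ p.support, w ∈ S → w = u ∨ w = v

namespace SimpleGraph

theorem gmv_of_forall_lt {V : Type*} [LinearOrder V] {G : SimpleGraph V} {S : Finset V}
    (h : ∀ u ∈ S, ∀ v ∈ S, u < v → ∃ p : G.Walk u v, p.length = G.dist u v ∧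
      ∀ w ∈ p.support, w ∈ S → w = u ∨ w = v) :
    gmv G S := by
  intro u hu v hv huv
  rcases huv.lt_or_gt with huv | hvu
  · exact h u hu v hv huv
  · obtain ⟨p, hlen, hp⟩ := h v hv u hu hvu
    refine ⟨p.reverse, by rw [Walk.length_reverse, hlen, dist_comm], fun w hw hwS => ?_⟩
    rw [Walk.support_reverse, List.mem_reverse] at hw
    exact (hp w hw hwS).symm

theorem Walk.apply_le_apply_add_length {V : Type*} {G : SimpleGraph V} {φ : V → ℕ}
    (hφ : ∀ x y, G.Adj x y → φ y ≤ φ x + 1) {u v : V} (p : G.Walk u v) :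
    φ v ≤ φ u + p.length := by
  induction p with
  | nil => simp
  | cons h _ ih =>
    rw [Walk.length_cons]
    have := hφ _ _ h
    omega

variable {n : ℕ}

theorem _root_.Fin.val_sub_eq_ite (a b : Fin n) :
    (a - b).val = if b ≤ a then a.val - b.val else n + a.val - b.val := by
  split_ifs with h
  · exact Fin.sub_val_of_le h
  · exact Fin.coe_sub_iff_lt.mpr (not_le.mp h)

theorem cycleGraph_adj_val {u v : Fin n} (h : (cycleGraph n).Adj u v) :
    u.val + 1 = v.val ∨ v.val + 1 = u.val ∨
      (u.val = 0 ∧ v.val + 1 = n) ∨ (v.val = 0 ∧ u.val + 1 = n) := by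
  rw [cycleGraph_adj', Fin.val_sub_eq_ite, Fin.val_sub_eq_ite] at h
  have := u.isLt
  have := v.isLt
  simp only [Fin.le_def] at h
  split_ifs at h <;> omega

theorem cycleGraph_adj_of_val_eq_zero (hn : 2 ≤ n) {u v : Fin n} (hu : u.val = 0)
    (hv : v.val + 1 = n) : (cycleGraph n).Adj u v := by
  rw [cycleGraph_adj', Fin.val_sub_eq_ite]
  left
  simp only [Fin.le_def, hu]
  split_ifs <;> omega

theorem cycleGraph_mem_support_of_lt {a b c d : Fin n} (hab : a < b) (hbc : b < c) (hcd : c < d)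
    (p : (cycleGraph n).Walk a c) : b ∈ p.support ∨ d ∈ p.support := by
  obtain ⟨e, he, hout, hin⟩ := p.exists_boundary_dart {w | ¬(b < w ∧ w < d)}
    (fun h => (h.1.trans hab).false) (fun h => h ⟨hbc, hcd⟩)
  have hend : e.fst = b ∨ e.fst = d := by
    have := cycleGraph_adj_val e.adj
    simp only [Set.mem_ofPred_eq, Fin.lt_def, not_and, not_lt] at hout hin
    simp only [Fin.ext_iff]
    omega
  rcases hend with h | h <;> rw [← h]
  · exact .inl (p.dart_fst_mem_support_of_mem_darts he)
  · exact .inr (p.dart_fst_mem_support_of_mem_darts he)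

theorem card_le_three_of_gmv_cycleGraph {S : Finset (Fin n)} (hS : gmv (cycleGraph n) S) :
    S.card ≤ 3 := by
  by_contra! h
  obtain ⟨T, hTS, hT⟩ := Finset.exists_subset_card_eq (s := S) h
  set f := T.orderEmbOfFin hT
  have hf : ∀ i, f i ∈ S := fun i => hTS (T.orderEmbOfFin_mem hT i)
  obtain ⟨p, -, hp⟩ := hS (f 0) (hf 0) (f 2) (hf 2) (f.injective.ne (by decide))
  rcases cycleGraph_mem_support_of_lt (f.strictMono (show (0 : Fin 4) < 1 by decide))
    (f.strictMono (show (1 : Fin 4) < 2 by decide))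
    (f.strictMono (show (2 : Fin 4) < 3 by decide)) p with h1 | h3
  · rcases hp _ h1 (hf 1) with h | h <;> exact absurd (f.injective h) (by decide)
  · rcases hp _ h3 (hf 3) with h | h <;> exact absurd (f.injective h) (by decide)

theorem cycleGraph_exists_walk_of_le {a b : Fin n} (hab : a ≤ b) :
    ∃ p : (cycleGraph n).Walk a b, p.length = b.val - a.val ∧ ∀ w ∈ p.support, a ≤ w ∧ w ≤ b := by
  obtain ⟨k, hk⟩ : ∃ k, b.val = a.val + k := ⟨b.val - a.val, by rw [Fin.le_def] at hab; omega⟩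
  induction k generalizing b with
  | zero =>
    obtain rfl : b = a := Fin.ext hk
    exact ⟨.nil, by simp, by simp⟩
  | succ k ih =>
    let b' : Fin n := ⟨a.val + k, by omega⟩
    obtain ⟨q, hlen, hq⟩ := ih (b := b') (by simp [b', Fin.le_def]) rfl
    have hadj : (cycleGraph n).Adj b' b :=
      pathGraph_le_cycleGraph (pathGraph_adj.mpr (.inl (by simp [b', hk]; omega)))
    refine ⟨q.concat hadj, by simp only [Walk.length_concat, hlen, b', hk]; omega, ?_⟩
    intro w hw
    rw [Walk.support_concat, List.mem_append, List.mem_singleton] at hw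
    rcases hw with hw | rfl
    · have := hq w hw
      simp only [Fin.le_def, b'] at this ⊢
      omega
    · exact ⟨hab, le_rfl⟩

theorem cycleGraph_le_dist_of_le {a b : Fin n} (hab : a ≤ b) (h : 2 * (b.val - a.val) ≤ n) :
    b.val - a.val ≤ (cycleGraph n).dist a b := by
  let φ : Fin n → ℕ := fun w =>
    min (w.val - a.val + (a.val - w.val)) (n - (w.val - a.val + (a.val - w.val)))
  have hφ : ∀ x y, (cycleGraph n).Adj x y → φ y ≤ φ x + 1 := by
    intro x y hxy
    have := cycleGraph_adj_val hxy
    have := a.isLt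
    simp only [φ]
    omega
  obtain ⟨p, hp⟩ := (cycleGraph_preconnected a b).exists_walk_length_eq_dist
  have := p.apply_le_apply_add_length hφ
  simp only [φ, Fin.le_def] at this hab
  omega

theorem cycleGraph_exists_geodesic_of_le {a b : Fin n} (hab : a ≤ b)
    (h : 2 * (b.val - a.val) ≤ n) :
    ∃ p : (cycleGraph n).Walk a b, p.length = (cycleGraph n).dist a b ∧
      ∀ w ∈ p.support, a ≤ w ∧ w ≤ b := by
  obtain ⟨p, hlen, hp⟩ := cycleGraph_exists_walk_of_le hab
  exact ⟨p, le_antisymm (hlen ▸ cycleGraph_le_dist_of_le hab h) (dist_le p), hp⟩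

theorem gmv_cycleGraph_zero_half_last (hn : 3 ≤ n) :
    gmv (cycleGraph n) {⟨0, by omega⟩, ⟨n / 2, by omega⟩, ⟨n - 1, by omega⟩} := by
  set S : Finset (Fin n) := {⟨0, by omega⟩, ⟨n / 2, by omega⟩, ⟨n - 1, by omega⟩}
  have memS (w : Fin n) : w ∈ S ↔ w.val = 0 ∨ w.val = n / 2 ∨ w.val = n - 1 := by
    simp [S, Fin.ext_iff]
  have geodesic {a b : Fin n} (hab : a.val ≤ b.val) (hba : 2 * (b.val - a.val) ≤ n)
      (hS : ∀ w ∈ S, a.val ≤ w.val → w.val ≤ b.val → w.val = a.val ∨ w.val = b.val) :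
      ∃ p : (cycleGraph n).Walk a b, p.length = (cycleGraph n).dist a b ∧
        ∀ w ∈ p.support, w ∈ S → w = a ∨ w = b := by
    obtain ⟨p, hlen, hp⟩ := cycleGraph_exists_geodesic_of_le (Fin.le_def.mpr hab) hba
    refine ⟨p, hlen, fun w hw hwS => ?_⟩
    simpa only [Fin.ext_iff] using hS w hwS (hp w hw).1 (hp w hw).2
  apply gmv_of_forall_lt
  intro u hu v hv huv
  rw [memS] at hu hv
  rw [Fin.lt_def] at huv
  rcases hu with hu | hu | hu <;> rcases hv with hv | hv | hv
  all_goals try (exfalso; omega)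
  · exact geodesic (by omega) (by omega) (fun w hw => by rw [memS] at hw; omega)
  · have hadj := cycleGraph_adj_of_val_eq_zero (v := v) (by omega) hu (by omega)
    exact ⟨hadj.toWalk, by simp [dist_eq_one_iff_adj.mpr hadj], by simp⟩
  · exact geodesic (by omega) (by omega) (fun w hw => by rw [memS] at hw; omega)

end SimpleGraph

/-- In a cycle graph with at least 4 vertices, the maximum size of a set in
geodesic mutual visibility is exactly 3. -/
theorem stmt1 (n : ℕ) (hn : 4 ≤ n) :
    IsGreatest {k : ℕ | ∃ S : Finset (Fin n),
      gmv (SimpleGraph.cycleGraph n) S ∧ S.card = k} 3 := by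
  refine ⟨⟨_, SimpleGraph.gmv_cycleGraph_zero_half_last (by omega), ?_⟩, ?_⟩
  · rw [Finset.card_eq_three]
    exact ⟨_, _, _, by simp; omega, by simp; omega, by simp; omega, rfl⟩
  · rintro k ⟨S, hS, rfl⟩
    exact SimpleGraph.card_le_three_of_gmv_cycleGraph hS
end

section
/- For any tree T with at least 2 vertices, the maximum size of a set of vertices in geodesic mutual visibility equals the number of leaves of T. -/
open SimpleGraph

set_option linter.unusedSectionVars false

section Aux
variable {V : Type*} [Fintype V] [DecidableEq V] {G : SimpleGraph V}

/-- The unique path between two vertices of a tree. -/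
noncomputable def pth (hT : G.IsTree) (x y : V) : G.Walk x y :=
  (hT.existsUnique_path x y).exists.choose

lemma pth_isPath (hT : G.IsTree) (x y : V) : (pth hT x y).IsPath :=
  (hT.existsUnique_path x y).exists.choose_spec

lemma path_eq_pth (hT : G.IsTree) {x y : V} (p : G.Walk x y) (hp : p.IsPath) :
    p = pth hT x y :=
  (hT.existsUnique_path x y).unique hp (pth_isPath hT x y)

lemma isPath_length_eq_dist (hT : G.IsTree) {x y : V} (p : G.Walk x y) (hp : p.IsPath) :
    p.length = G.dist x y := by
  have hr : G.Reachable x y := hT.isConnected.preconnected x y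
  obtain ⟨w, hw⟩ := hr.exists_walk_length_eq_dist
  have h1 : G.dist x y ≤ p.length := SimpleGraph.dist_le p
  have h2 : w.bypass.length ≤ w.length := Walk.length_bypass_le w
  have h3 : p = w.bypass := by
    rw [path_eq_pth hT p hp, path_eq_pth hT w.bypass w.bypass_isPath]
  have h4 : p.length = w.bypass.length := congrArg Walk.length h3
  omega

lemma pth_length (hT : G.IsTree) (x y : V) : (pth hT x y).length = G.dist x y :=
  isPath_length_eq_dist hT _ (pth_isPath hT x y)

lemma dist_add_of_mem_support (hT : G.IsTree) {x y s : V} (p : G.Walk x y)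
    (hp : p.IsPath) (hs : s ∈ p.support) :
    G.dist x s + G.dist s y = G.dist x y := by
  have h1 := isPath_length_eq_dist hT _ (hp.takeUntil hs)
  have h2 := isPath_length_eq_dist hT _ (hp.dropUntil hs)
  have h3 := isPath_length_eq_dist hT p hp
  have h4 := congrArg Walk.length (p.take_spec hs)
  rw [Walk.length_append] at h4
  omega

lemma tree_dist_pos (hT : G.IsTree) {x y : V} (h : x ≠ y) : 0 < G.dist x y :=
  hT.isConnected.pos_dist_of_ne h

lemma tree_eq_of_dist_eq_zero (hT : G.IsTree) {x y : V} (h : G.dist x y = 0) : x = y :=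
  (hT.isConnected.dist_eq_zero_iff).mp h

lemma isPath_concat {u v w : V} {p : G.Walk u v} (hp : p.IsPath) (h : G.Adj v w)
    (hw : w ∉ p.support) : (p.concat h).IsPath := by
  rw [← Walk.isPath_reverse_iff, Walk.reverse_concat]
  exact hp.reverse.cons (by simp [Walk.support_reverse, hw])

/-- The neighbor of `s` in the direction of `x`. -/
noncomputable def twd (hT : G.IsTree) (s x : V) : V := (pth hT s x).getVert 1

lemma twd_adj (hT : G.IsTree) {s x : V} (h : x ≠ s) : G.Adj s (twd hT s x) := by
  have hl : 0 < (pth hT s x).length := by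
    rw [pth_length]; exact tree_dist_pos hT (Ne.symm h)
  have := (pth hT s x).adj_getVert_succ hl
  rwa [Walk.getVert_zero] at this

lemma twd_mem_support (hT : G.IsTree) {s x : V} (h : x ≠ s) :
    twd hT s x ∈ (pth hT s x).support := by
  rw [Walk.mem_support_iff_exists_getVert]
  exact ⟨1, rfl, by rw [pth_length]; exact tree_dist_pos hT (Ne.symm h)⟩

lemma twd_dist (hT : G.IsTree) {s x : V} (h : x ≠ s) :
    G.dist s x = G.dist (twd hT s x) x + 1 := by
  have hsplit := dist_add_of_mem_support hT _ (pth_isPath hT s x) (twd_mem_support hT h)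
  have h1 : G.dist s (twd hT s x) = 1 := dist_eq_one_iff_adj.mpr (twd_adj hT h)
  omega

lemma twd_unique (hT : G.IsTree) {s x a : V} (hx : x ≠ s) (ha : G.Adj s a)
    (hd : G.dist s x = G.dist a x + 1) : a = twd hT s x := by
  have hns : s ∉ (pth hT a x).support := by
    intro hs
    have h0 := dist_add_of_mem_support hT _ (pth_isPath hT a x) hs
    have h1 : G.dist a s = 1 := dist_eq_one_iff_adj.mpr ha.symm
    omega
  have hp : (Walk.cons ha (pth hT a x)).IsPath := (pth_isPath hT a x).cons hns
  have he := path_eq_pth hT _ hp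
  have := congrArg (fun q => Walk.getVert q 1) he
  simpa [Walk.getVert_cons_succ, Walk.getVert_zero, twd] using this

lemma twd_adj_self (hT : G.IsTree) {s a : V} (ha : G.Adj s a) : twd hT s a = a :=
  (twd_unique hT ha.ne' ha (by simp [dist_eq_one_iff_adj.mpr ha])).symm

lemma adj_dist_ne (hT : G.IsTree) {s u v : V} (h : G.Adj u v) :
    G.dist s u ≠ G.dist s v := by
  intro he
  by_cases hus : u = s
  · subst hus
    simp only [SimpleGraph.dist_self] at he
    exact h.ne (tree_eq_of_dist_eq_zero hT he.symm)
  by_cases hvs : v = s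
  · subst hvs
    simp only [SimpleGraph.dist_self] at he
    exact h.ne (tree_eq_of_dist_eq_zero hT he).symm
  have hd1 : G.dist u v = 1 := dist_eq_one_iff_adj.mpr h
  have hns : u ∉ (pth hT s v).support := by
    intro hu
    have h0 := dist_add_of_mem_support hT _ (pth_isPath hT s v) hu
    have hp := tree_dist_pos hT (Ne.symm hus)
    omega
  have hp : ((pth hT s v).concat h.symm).IsPath :=
    isPath_concat (pth_isPath hT s v) h.symm hns
  have hlen := isPath_length_eq_dist hT _ hp
  rw [Walk.length_concat, pth_length] at hlen
  omega

lemma twd_edge (hT : G.IsTree) {s u v : V} (h : G.Adj u v) (hv : v ≠ s)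
    (hd : G.dist s u = G.dist s v + 1) : twd hT s u = twd hT s v := by
  have hu : u ≠ s := by
    intro he; subst he
    simp only [SimpleGraph.dist_self] at hd
    omega
  set t := twd hT s v with ht
  have hta : G.Adj s t := twd_adj hT hv
  have htd : G.dist s v = G.dist t v + 1 := twd_dist hT hv
  have h1 : G.dist t u ≤ G.dist t v + G.dist v u := hT.isConnected.dist_triangle
  have h2 : G.dist s u ≤ G.dist s t + G.dist t u := hT.isConnected.dist_triangle
  have h3 : G.dist v u = 1 := dist_eq_one_iff_adj.mpr h.symm
  have h4 : G.dist s t = 1 := dist_eq_one_iff_adj.mpr hta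
  exact (twd_unique hT hu hta (by omega)).symm

lemma twd_eq_of_avoid (hT : G.IsTree) {s x y : V} (w : G.Walk x y)
    (hs : s ∉ w.support) : twd hT s x = twd hT s y := by
  induction w with
  | nil => rfl
  | @cons x b y h p ih =>
    rw [Walk.support_cons, List.mem_cons] at hs
    push_neg at hs
    have hxs : x ≠ s := fun he => hs.1 he.symm
    have hbs : b ≠ s := by
      intro he
      exact hs.2 (he ▸ Walk.start_mem_support p)
    have hne := adj_dist_ne hT (s := s) h
    have t1 : G.dist s x ≤ G.dist s b + G.dist b x := hT.isConnected.dist_triangle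
    have t2 : G.dist s b ≤ G.dist s x + G.dist x b := hT.isConnected.dist_triangle
    have hbx : G.dist b x = 1 := dist_eq_one_iff_adj.mpr h.symm
    have hxb : G.dist x b = 1 := dist_eq_one_iff_adj.mpr h
    have hstep : twd hT s x = twd hT s b := by
      rcases Nat.lt_or_ge (G.dist s b) (G.dist s x) with hlt | hge
      · exact twd_edge hT h hbs (by omega)
      · exact (twd_edge hT h.symm hxs (by omega)).symm
    rw [hstep]
    exact ih hs.2

/-- Toward any neighbor of any vertex there is a leaf. -/
lemma exists_leaf_toward [DecidableRel G.Adj] (hT : G.IsTree) {s a : V} (ha : G.Adj s a) :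
    ∃ ℓ : V, G.degree ℓ = 1 ∧ ℓ ≠ s ∧ twd hT s ℓ = a := by
  classical
  set F : Finset V := Finset.univ.filter (fun x => x ≠ s ∧ twd hT s x = a) with hF
  have haF : a ∈ F := by
    simp only [hF, Finset.mem_filter, Finset.mem_univ, true_and]
    exact ⟨ha.ne', twd_adj_self hT ha⟩
  obtain ⟨ℓ, hℓF, hmax⟩ := F.exists_max_image (fun x => G.dist s x) ⟨a, haF⟩
  simp only [hF, Finset.mem_filter, Finset.mem_univ, true_and] at hℓF
  obtain ⟨hℓs, hℓa⟩ := hℓF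
  refine ⟨ℓ, ?_, hℓs, hℓa⟩
  set m := twd hT ℓ s with hm
  have hma : G.Adj ℓ m := twd_adj hT (Ne.symm hℓs)
  have hdm : G.dist ℓ s = G.dist m s + 1 := twd_dist hT (Ne.symm hℓs)
  have hall : ∀ c, G.Adj ℓ c → c = m := by
    intro c hc
    have hne := adj_dist_ne hT (s := s) hc
    have t1 : G.dist s c ≤ G.dist s ℓ + G.dist ℓ c := hT.isConnected.dist_triangle
    have t2 : G.dist s ℓ ≤ G.dist s c + G.dist c ℓ := hT.isConnected.dist_triangle
    have h3 : G.dist ℓ c = 1 := dist_eq_one_iff_adj.mpr hc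
    have h4 : G.dist c ℓ = 1 := dist_eq_one_iff_adj.mpr hc.symm
    rcases Nat.lt_or_ge (G.dist s c) (G.dist s ℓ) with hlt | hge
    · have hdc : G.dist ℓ s = G.dist c s + 1 := by
        rw [SimpleGraph.dist_comm (u := ℓ), SimpleGraph.dist_comm (u := c)]
        omega
      exact twd_unique hT (Ne.symm hℓs) hc hdc
    · have hcs : c ≠ s := by
        intro he; subst he
        simp only [SimpleGraph.dist_self] at hge
        have := tree_dist_pos hT (Ne.symm hℓs)
        omega
      have hdc : G.dist s c = G.dist s ℓ + 1 := by omega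
      have heq : twd hT s c = twd hT s ℓ := twd_edge hT hc.symm hℓs hdc
      have hcF : c ∈ F := by
        simp only [hF, Finset.mem_filter, Finset.mem_univ, true_and]
        exact ⟨hcs, heq.trans hℓa⟩
      have := hmax c hcF
      omega
  have hnb : G.neighborFinset ℓ = {m} := by
    apply Finset.eq_singleton_iff_unique_mem.mpr
    constructor
    · rwa [SimpleGraph.mem_neighborFinset]
    · intro c hcm
      exact hall c ((SimpleGraph.mem_neighborFinset _ _ _).mp hcm)
  rw [SimpleGraph.degree, hnb, Finset.card_singleton]

end Aux

/-- In a tree with at least two vertices, the maximum size of a set in geodesic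
mutual visibility equals the number of leaves (vertices of degree 1). -/
theorem stmt2 {V : Type*} [Fintype V] [DecidableEq V] (G : SimpleGraph V)
    [DecidableRel G.Adj] (hT : G.IsTree) (h2 : 2 ≤ Fintype.card V) :
    IsGreatest {k : ℕ | ∃ S : Finset V, gmv G S ∧ S.card = k}
      (Finset.univ.filter (fun v => G.degree v = 1)).card := by
  classical
  set L := Finset.univ.filter (fun v => G.degree v = 1) with hL
  constructor
  · -- the set of leaves is in geodesic mutual visibility
    refine ⟨L, ?_, rfl⟩
    intro u hu v hv huv
    refine ⟨pth hT u v, pth_length hT u v, ?_⟩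
    intro w hw hwL
    by_contra hcon
    push_neg at hcon
    obtain ⟨hwu, hwv⟩ := hcon
    simp only [hL, Finset.mem_filter, Finset.mem_univ, true_and] at hwL
    have ha : G.Adj w (twd hT w u) := twd_adj hT (Ne.symm hwu)
    have hb : G.Adj w (twd hT w v) := twd_adj hT (Ne.symm hwv)
    have hsplit := dist_add_of_mem_support hT _ (pth_isPath hT u v) hw
    have hdu : G.dist w u = G.dist (twd hT w u) u + 1 := twd_dist hT (Ne.symm hwu)
    have hdv : G.dist w v = G.dist (twd hT w v) v + 1 := twd_dist hT (Ne.symm hwv)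
    have hne : twd hT w u ≠ twd hT w v := by
      intro he
      rw [← he] at hdv
      have htri : G.dist u v ≤ G.dist u (twd hT w u) + G.dist (twd hT w u) v :=
        hT.isConnected.dist_triangle
      have c1 : G.dist u w = G.dist w u := SimpleGraph.dist_comm
      have c2 : G.dist u (twd hT w u) = G.dist (twd hT w u) u := SimpleGraph.dist_comm
      omega
    have hdeg2 : 2 ≤ G.degree w := by
      have hsub : ({twd hT w u, twd hT w v} : Finset V) ⊆ G.neighborFinset w := by
        intro c hc
        simp only [Finset.mem_insert, Finset.mem_singleton] at hc
        rcases hc with rfl | rfl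
        · rwa [SimpleGraph.mem_neighborFinset]
        · rwa [SimpleGraph.mem_neighborFinset]
      calc 2 = ({twd hT w u, twd hT w v} : Finset V).card := (Finset.card_pair hne).symm
        _ ≤ (G.neighborFinset w).card := Finset.card_le_card hsub
        _ = G.degree w := rfl
    omega
  · rintro k ⟨S, hS, rfl⟩
    have key : ∀ s : V, ∃ ℓ : V, s ∈ S →
        ℓ ∈ L ∧ ∀ t ∈ S, t ≠ s → G.dist t ℓ = G.dist t s + G.dist s ℓ := by
      intro s
      by_cases hsS : s ∈ S
      swap
      · exact ⟨s, fun h => absurd h hsS⟩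
      by_cases hdeg : G.degree s = 1
      · refine ⟨s, fun _ => ⟨by simp [hL, hdeg], fun t ht hts => by simp⟩⟩
      · have hpos : 0 < G.degree s := by
          obtain ⟨y, hy⟩ := Fintype.exists_ne_of_one_lt_card (by omega) s
          exact (G.degree_pos_iff_exists_adj s).mpr ⟨_, twd_adj hT hy⟩
        have h2d : 1 < (G.neighborFinset s).card := by
          have : (G.neighborFinset s).card = G.degree s := rfl
          omega
        obtain ⟨a, haN, b, hbN, hab⟩ := Finset.one_lt_card.mp h2d
        rw [SimpleGraph.mem_neighborFinset] at haN hbN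
        have hcom : ∀ t1 ∈ S, ∀ t2 ∈ S, t1 ≠ s → t2 ≠ s →
            twd hT s t1 = twd hT s t2 := by
          intro t1 ht1 t2 ht2 h1s h2s
          by_cases h12 : t1 = t2
          · rw [h12]
          obtain ⟨p, hplen, hpint⟩ := hS t1 ht1 t2 ht2 h12
          by_contra htw
          have hsp : s ∈ p.support := by
            by_contra hns
            exact htw (twd_eq_of_avoid hT p hns)
          rcases hpint s hsp hsS with rfl | rfl
          · exact h1s rfl
          · exact h2s rfl
        obtain ⟨c, hc, hcprop⟩ : ∃ c, G.Adj s c ∧ ∀ t ∈ S, t ≠ s → twd hT s t ≠ c := by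
          by_cases hex : ∃ t ∈ S, t ≠ s
          · obtain ⟨t0, ht0, ht0s⟩ := hex
            by_cases hw : twd hT s t0 = a
            · refine ⟨b, hbN, ?_⟩
              intro t ht hts he
              exact hab (by rw [← hw, hcom t0 ht0 t ht ht0s hts]; exact he)
            · refine ⟨a, haN, ?_⟩
              intro t ht hts he
              exact hw ((hcom t0 ht0 t ht ht0s hts).trans he)
          · push_neg at hex
            exact ⟨a, haN, fun t ht hts => absurd (hex t ht) (by simp [hts])⟩
        obtain ⟨ℓ, hldeg, hls, hltwd⟩ := exists_leaf_toward hT hc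
        refine ⟨ℓ, fun _ => ⟨by simp [hL, hldeg], ?_⟩⟩
        intro t ht hts
        have htw : twd hT s t ≠ twd hT s ℓ := by
          rw [hltwd]; exact hcprop t ht hts
        have hsp : s ∈ (pth hT t ℓ).support := by
          by_contra hns
          exact htw (twd_eq_of_avoid hT _ hns)
        exact (dist_add_of_mem_support hT _ (pth_isPath hT t ℓ) hsp).symm
    choose f hf using key
    refine Finset.card_le_card_of_injOn f (fun s hs => (hf s hs).1) ?_
    intro s hs t ht hfe
    rw [Finset.mem_coe] at hs ht
    by_contra hst
    have e1 := (hf t ht).2 s hs hst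
    have e2 := (hf s hs).2 t ht (Ne.symm hst)
    rw [hfe] at e2
    have c1 : G.dist t s = G.dist s t := SimpleGraph.dist_comm
    have h0 : G.dist s t = 0 := by omega
    exact hst (tree_eq_of_dist_eq_zero hT h0)
end

section
/- In the grid graph G_{M,N}, if a set S of vertices in geodesic mutual visibility contains three vertices in the same row, then S is not in geodesic mutual visibility; equivalently, any set in geodesic mutual visibility contains at most 2 vertices per row and at most 2 vertices per column. -/
/-- The `M × N` grid graph: vertices `{1,…,M} × {1,…,N}` (modeled as
`Fin M × Fin N`), edges between vertices at L1-distance 1. -/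
def gridGraph (M N : ℕ) : SimpleGraph (Fin M × Fin N) where
  Adj a b := Nat.dist (a.1 : ℕ) (b.1 : ℕ) + Nat.dist (a.2 : ℕ) (b.2 : ℕ) = 1
  symm := by
    constructor
    intro a b h
    simpa [Nat.dist_comm] using h
  loopless := by
    constructor
    intro a h
    simp [Nat.dist_self] at h

/-!
Grid distance is the ℓ¹ distance (the grid is the box product of two paths), and graph
distance splits additively at every vertex of a geodesic, so a shortest walk between two
vertices of a row never leaves that row. Its column changes by at most one per step, so it
passes through every vertex of the row in between. Hence among three vertices of a row the
middle one blocks every shortest walk between the outer two; likewise for columns.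
-/

namespace SimpleGraph

variable {V : Type*} {G : SimpleGraph V} {u v w : V}

theorem Walk.exists_mem_support_eq_of_le_add_one (p : G.Walk u v) (f : V → ℕ)
    (hf : ∀ x y, G.Adj x y → f y ≤ f x + 1) {b : ℕ} (hu : f u ≤ b) (hv : b ≤ f v) :
    ∃ w ∈ p.support, f w = b := by
  rcases hu.eq_or_lt with hub | hub
  · exact ⟨u, p.start_mem_support, hub⟩
  obtain ⟨d, hd, hfst, hsnd⟩ := p.exists_boundary_dart {x | f x < b} hub (by simpa using hv)
  have hfst : f d.fst < b := hfst
  have hsnd : ¬f d.snd < b := hsnd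
  have := hf _ _ d.adj
  exact ⟨d.snd, p.dart_snd_mem_support_of_mem_darts hd, by omega⟩

theorem Walk.dist_add_dist_eq_of_mem_support (p : G.Walk u v) (hp : p.length = G.dist u v)
    (hw : w ∈ p.support) : G.dist u w + G.dist w v = G.dist u v := by
  classical
  have hsplit : (p.takeUntil w hw).length + (p.dropUntil w hw).length = p.length := by
    rw [← Walk.length_append, p.take_spec hw]
  have := (p.takeUntil w hw).reachable.dist_triangle_left v
  have := dist_le (p.takeUntil w hw)
  have := dist_le (p.dropUntil w hw)
  omega

theorem pathGraph.dist_le_length {n : ℕ} {a c : Fin n} (p : (pathGraph n).Walk a c) :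
    Nat.dist a c ≤ p.length := by
  induction p with
  | nil => simp
  | cons hadj _ ih =>
    rw [pathGraph_adj] at hadj
    rw [Walk.length_cons]
    unfold Nat.dist at ih ⊢
    omega

theorem pathGraph.exists_walk_length_eq_dist {n : ℕ} (a c : Fin n) :
    ∃ p : (pathGraph n).Walk a c, p.length = Nat.dist a c := by
  suffices h : ∀ k (a c : Fin n), (a : ℕ) + k = c → ∃ p : (pathGraph n).Walk a c, p.length = k by
    rcases le_total a c with hac | hca
    · obtain ⟨p, hp⟩ := h (c - a) a c (by omega)
      exact ⟨p, by rw [hp]; unfold Nat.dist; omega⟩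
    · obtain ⟨p, hp⟩ := h (a - c) c a (by omega)
      exact ⟨p.reverse, by rw [Walk.length_reverse, hp]; unfold Nat.dist; omega⟩
  intro k
  induction k with
  | zero =>
    rintro a c hac
    obtain rfl : a = c := Fin.ext hac
    exact ⟨.nil, rfl⟩
  | succ k ih =>
    rintro a c hac
    obtain ⟨p, hp⟩ := ih ⟨a + 1, by omega⟩ c (by simp only; omega)
    exact ⟨.cons (pathGraph_adj.2 (.inl rfl)) p, by rw [Walk.length_cons, hp]⟩

theorem pathGraph.edist_eq {n : ℕ} (a c : Fin n) : (pathGraph n).edist a c = Nat.dist a c := by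
  obtain ⟨p, hp⟩ := pathGraph.exists_walk_length_eq_dist a c
  exact le_antisymm (hp ▸ edist_le p) (le_iInf fun q => by exact_mod_cast dist_le_length q)

end SimpleGraph

theorem Finset.card_le_two_of_forall_not_lt_lt {α : Type*} [LinearOrder α] {s : Finset α}
    (h : ∀ a ∈ s, ∀ b ∈ s, ∀ c ∈ s, a < b → b < c → False) : s.card ≤ 2 := by
  rcases s.eq_empty_or_nonempty with rfl | hs
  · simp
  have : s ⊆ {s.min' hs, s.max' hs} := by
    intro b hb
    by_contra hne
    simp only [Finset.mem_insert, Finset.mem_singleton, not_or] at hne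
    exact h _ (s.min'_mem hs) b hb _ (s.max'_mem hs)
      ((s.min'_le b hb).lt_of_ne (Ne.symm hne.1)) ((s.le_max' b hb).lt_of_ne hne.2)
  exact (Finset.card_le_card this).trans Finset.card_le_two

theorem gmv.eq_or_eq_of_forall_mem_support {V : Type*} {G : SimpleGraph V} {S : Finset V}
    {u v w : V} (h : gmv G S) (hu : u ∈ S) (hv : v ∈ S) (hw : w ∈ S) (huv : u ≠ v)
    (hgeod : ∀ p : G.Walk u v, p.length = G.dist u v → w ∈ p.support) : w = u ∨ w = v := by
  obtain ⟨p, hp, hvis⟩ := h u hu v hv huv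
  exact hvis w (hgeod p hp) hw

theorem gmv.card_filter_le_two {V α β : Type*} [DecidableEq α] [LinearOrder β]
    {G : SimpleGraph V} {S : Finset V} (h : gmv G S) (line : V → α) (pos : V → β)
    (hinj : ∀ x y, line x = line y → pos x = pos y → x = y)
    (hgeod : ∀ u v w, line u = line v → line w = line u → pos u < pos w → pos w < pos v →
      ∀ p : G.Walk u v, p.length = G.dist u v → w ∈ p.support)
    (r : α) : (S.filter (fun x => line x = r)).card ≤ 2 := by
  have hinjOn : Set.InjOn pos (S.filter (fun x => line x = r)) := fun x hx y hy hxy =>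
    hinj x y ((Finset.mem_filter.1 hx).2.trans (Finset.mem_filter.1 hy).2.symm) hxy
  rw [← Finset.card_image_of_injOn hinjOn]
  refine Finset.card_le_two_of_forall_not_lt_lt ?_
  simp only [Finset.forall_mem_image, Finset.mem_filter, and_imp]
  intro u hu hur w hw hwr v hv hvr huw hwv
  have huv : u ≠ v := by rintro rfl; exact lt_asymm huw hwv
  rcases h.eq_or_eq_of_forall_mem_support hu hv hw huv
      (hgeod u v w (hur.trans hvr.symm) (hwr.trans hur.symm) huw hwv) with rfl | rfl
  · exact huw.ne rfl
  · exact hwv.ne rfl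

open SimpleGraph

namespace gridGraph

variable {M N : ℕ} {u v w : Fin M × Fin N}

theorem eq_boxProd_pathGraph : gridGraph M N = pathGraph M □ pathGraph N := by
  ext u v
  simp only [gridGraph, boxProd_adj, pathGraph_adj, Fin.ext_iff]
  unfold Nat.dist
  omega

theorem dist_eq (u v : Fin M × Fin N) :
    (gridGraph M N).dist u v = Nat.dist u.1 v.1 + Nat.dist u.2 v.2 := by
  rw [eq_boxProd_pathGraph, SimpleGraph.dist, edist_boxProd, pathGraph.edist_eq,
    pathGraph.edist_eq]
  norm_cast

theorem mem_support_of_fst_eq (p : (gridGraph M N).Walk u v)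
    (hp : p.length = (gridGraph M N).dist u v) (huv : u.1 = v.1) (hwu : w.1 = u.1)
    (huw : u.2 ≤ w.2) (hwv : w.2 ≤ v.2) : w ∈ p.support := by
  obtain ⟨x, hx, hxw⟩ := p.exists_mem_support_eq_of_le_add_one (fun x => (x.2 : ℕ))
    (fun x y hxy => by simp only [gridGraph, Nat.dist] at hxy; omega) huw hwv
  have hsplit := p.dist_add_dist_eq_of_mem_support hp hx
  simp only [dist_eq, Nat.dist] at hsplit
  obtain rfl : x = w := Prod.ext (Fin.ext (by omega)) (Fin.ext hxw)
  exact hx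

theorem mem_support_of_snd_eq (p : (gridGraph M N).Walk u v)
    (hp : p.length = (gridGraph M N).dist u v) (huv : u.2 = v.2) (hwu : w.2 = u.2)
    (huw : u.1 ≤ w.1) (hwv : w.1 ≤ v.1) : w ∈ p.support := by
  obtain ⟨x, hx, hxw⟩ := p.exists_mem_support_eq_of_le_add_one (fun x => (x.1 : ℕ))
    (fun x y hxy => by simp only [gridGraph, Nat.dist] at hxy; omega) huw hwv
  have hsplit := p.dist_add_dist_eq_of_mem_support hp hx
  simp only [dist_eq, Nat.dist] at hsplit
  obtain rfl : x = w := Prod.ext (Fin.ext hxw) (Fin.ext (by omega))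
  exact hx

end gridGraph

/-- Any set in geodesic mutual visibility in the grid graph contains at most
two vertices per row and at most two vertices per column. -/
theorem stmt4 (M N : ℕ) (S : Finset (Fin M × Fin N))
    (h : gmv (gridGraph M N) S) :
    (∀ r : Fin M, (S.filter (fun v => v.1 = r)).card ≤ 2) ∧
    (∀ c : Fin N, (S.filter (fun v => v.2 = c)).card ≤ 2) := by
  constructor
  · exact h.card_filter_le_two Prod.fst Prod.snd (fun _ _ => Prod.ext)
      fun _ _ _ huv hwu huw hwv p hp =>
        gridGraph.mem_support_of_fst_eq p hp huv hwu huw.le hwv.le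
  · exact h.card_filter_le_two Prod.snd Prod.fst (fun _ _ hline hpos => Prod.ext hpos hline)
      fun _ _ _ huv hwu huw hwv p hp =>
        gridGraph.mem_support_of_snd_eq p hp huv hwu huw.le hwv.le
end

section
/- A rotation by 90 degrees mapping the integer lattice ℤ² to itself has its center either at a lattice point or at the center of a unit square (half-integer in both coordinates); it cannot be at the midpoint of an edge. -/
/-- Embedding of a lattice point into the rational plane. -/
def toQ (p : ℤ × ℤ) : ℚ × ℚ := ((p.1 : ℚ), (p.2 : ℚ))

/-- Rotation by 90 degrees (counterclockwise) about a center `c`. -/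
def rot90 (c p : ℚ × ℚ) : ℚ × ℚ := (c.1 - (p.2 - c.2), c.2 + (p.1 - c.1))

/-- Rotation by 180 degrees about a center `c`. -/
def rot180 (c p : ℚ × ℚ) : ℚ × ℚ := (2 * c.1 - p.1, 2 * c.2 - p.2)

/-- A configuration `R` of robots on the integer grid is invariant under the
map `f` of the plane. -/
def invariant (f : ℚ × ℚ → ℚ × ℚ) (R : Finset (ℤ × ℤ)) : Prop :=
  (fun p => f (toQ p)) '' (R : Set (ℤ × ℤ)) = toQ '' (R : Set (ℤ × ℤ))

/-- A rotation by 90 degrees mapping the integer lattice into itself has its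
center either at a lattice point (type 1) or at the center of a unit square,
i.e. both coordinates half-integers (type 3); an edge midpoint (exactly one
half-integer coordinate, type 2) is impossible. -/
theorem stmt14 (c : ℚ × ℚ)
    (h : ∀ p : ℤ × ℤ, ∃ q : ℤ × ℤ, rot90 c (toQ p) = toQ q) :
    (∃ a b : ℤ, c = ((a : ℚ), (b : ℚ))) ∨
    (∃ a b : ℤ, c = ((a : ℚ) + 1/2, (b : ℚ) + 1/2)) := by
  obtain ⟨q, hq⟩ := h (0, 0)
  simp only [rot90, toQ, Prod.mk.injEq, Int.cast_zero] at hq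
  obtain ⟨h1, h2⟩ := hq
  rcases Int.even_or_odd (q.1 - q.2) with ⟨k, hk⟩ | ⟨k, hk⟩
  · left
    refine ⟨k, q.1 - k, ?_⟩
    have hk' : (q.1 : ℚ) - q.2 = k + k := by exact_mod_cast congrArg (Int.cast : ℤ → ℚ) hk
    ext <;> push_cast <;> linarith
  · right
    refine ⟨k, q.1 - k - 1, ?_⟩
    have hk' : (q.1 : ℚ) - q.2 = 2 * k + 1 := by exact_mod_cast congrArg (Int.cast : ℤ → ℚ) hk
    ext <;> push_cast <;> linarith
end
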